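/- Let T be an n×n primitive matrix with real entries and let λ be its spectral radius. Then for every complex eigenvalue λ' of T with λ' ≠ λ one has |λ'| < λ; in particular λ is a simple maximal eigenvalue in absolute value. -/

import Mathlib

open Matrix

/-- A real square matrix is primitive if it is entrywise nonnegative and some
positive power of it has all entries strictly positive. -/
def Matrix.IsPrimitive' {n : ℕ} (T : Matrix (Fin n) (Fin n) ℝ) : Prop :=
  (∀ i j, 0 ≤ T i j) ∧ ∃ k : ℕ, 0 < k ∧ ∀ i j, 0 < (T ^ k) i j

/-- The spectral radius of a real square matrix: the maximum of the absolute
values of its complex eigenvalues. -/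
noncomputable def specRad {n : ℕ} (A : Matrix (Fin n) (Fin n) ℝ) : ℝ :=
  sSup {x : ℝ | ∃ β : ℂ, β ∈ spectrum ℂ (A.map (Complex.ofReal)) ∧ x = ‖β‖}

/-!
Let `β` be an eigenvalue of maximal modulus of a positive matrix `A`, with eigenvector `x`, and
put `u = |x|`, so that `|β| u ≤ A u` entrywise. If this inequality were strict somewhere, then
by positivity `|β| (A u) < A (A u)` in every entry; since `‖A ^ k‖` grows at most like `r ^ k`
for every `r` above the spectral radius (Gelfand's formula), this produces an eigenvalue of
modulus larger than `|β|`. Hence `A u = |β| u`, and equality in the triangle inequality along one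
row makes `x` a unimodular multiple of `u`, so `β = |β|`. A primitive matrix `T` has both `T ^ k`
and `T ^ (k + 1)` positive; applying this to `β ^ k` and `β ^ (k + 1)` gives `β = |β|`, the spectral
radius.
-/

open Filter
open scoped NNReal ENNReal ComplexOrder

theorem eq_of_pow_eq_of_pow_succ_eq {M₀ : Type*} [CommMonoidWithZero M₀] [IsCancelMulZero M₀]
    {a b : M₀} {k : ℕ} (h : a ^ k = b ^ k) (h' : a ^ (k + 1) = b ^ (k + 1)) : a = b := by
  by_cases hb : b ^ k = 0
  · rw [eq_zero_of_pow_eq_zero hb, eq_zero_of_pow_eq_zero (h.trans hb)]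
  · rw [pow_succ, pow_succ, h] at h'
    exact mul_left_cancel₀ hb h'

theorem Complex.exists_forall_eq_norm_mul_of_norm_sum_eq {ι : Type*} {s : Finset ι}
    {z : ι → ℂ} (h : ‖∑ i ∈ s, z i‖ = ∑ i ∈ s, ‖z i‖) :
    ∃ d : ℂ, ‖d‖ = 1 ∧ ∀ i ∈ s, z i = ‖z i‖ * d := by
  set S := ∑ i ∈ s, z i
  by_cases hS : S = 0
  · have hz : ∀ i ∈ s, ‖z i‖ = 0 := by
      rw [← Finset.sum_eq_zero_iff_of_nonneg fun i _ => norm_nonneg _, ← h, hS, norm_zero]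
    exact ⟨1, norm_one, fun i hi => by
      rw [norm_eq_zero.1 (hz i hi), norm_zero, ofReal_zero, zero_mul]⟩
  -- rotating by `e` makes the sum real and nonnegative, hence every summand too
  set e : ℂ := ‖S‖ / S
  have he : ‖e‖ = 1 := by simp [e, hS]
  have he0 : e ≠ 0 := by rw [← norm_ne_zero_iff, he]; exact one_ne_zero
  have hle : ∀ i ∈ s, (z i * e).re ≤ ‖z i‖ := fun i _ => by
    simpa [norm_mul, he] using re_le_norm (z i * e)
  have hsum : ∑ i ∈ s, (z i * e).re = ∑ i ∈ s, ‖z i‖ := by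
    rw [← re_sum, ← Finset.sum_mul, mul_div_cancel₀ _ hS, ofReal_re, h]
  refine ⟨e⁻¹, by rw [norm_inv, he, inv_one], fun i hi => ?_⟩
  have hnonneg : 0 ≤ z i * e := by
    rw [← re_eq_norm, norm_mul, he, mul_one]
    exact (Finset.sum_eq_sum_iff_of_le hle).1 hsum i hi
  rw [eq_mul_inv_iff_mul_eq₀ he0, eq_coe_norm_of_nonneg hnonneg, norm_mul, he, mul_one]

theorem spectrum.eventually_nnnorm_pow_lt {A : Type*} [NormedRing A] [NormedAlgebra ℂ A]
    [CompleteSpace A] (a : A) {r : ℝ≥0} (h : spectralRadius ℂ a < r) :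
    ∀ᶠ k in atTop, ‖a ^ k‖₊ < r ^ k := by
  filter_upwards [(pow_nnnorm_pow_one_div_tendsto_nhds_spectralRadius a).eventually_lt_const h,
    eventually_gt_atTop 0] with k hk hk0
  rw [one_div, ← ENNReal.coe_rpow_of_nonneg _ (by positivity), ENNReal.coe_lt_coe,
    NNReal.rpow_inv_lt_iff (by positivity)] at hk
  exact_mod_cast hk

namespace Matrix

variable {m n : Type*} [Fintype n]

section OrderedSemiring

variable {R : Type*} [CommSemiring R] [PartialOrder R]

theorem mulVec_mono_of_nonneg [IsOrderedRing R] {A : Matrix m n R} (hA : ∀ i j, 0 ≤ A i j)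
    {v w : n → R} (h : v ≤ w) : A *ᵥ v ≤ A *ᵥ w :=
  fun i => Finset.sum_le_sum fun j _ => mul_le_mul_of_nonneg_left (h j) (hA i j)

theorem mulVec_pos_of_pos [IsStrictOrderedRing R] {A : Matrix m n R} (hA : ∀ i j, 0 < A i j)
    {v : n → R} (hv : 0 ≤ v) (hv0 : v ≠ 0) (i : m) : 0 < (A *ᵥ v) i := by
  obtain ⟨j, hj⟩ := Function.ne_iff.1 hv0
  exact Finset.sum_pos' (fun k _ => mul_nonneg (hA i k).le (hv k))
    ⟨j, Finset.mem_univ j, mul_pos (hA i j) ((hv j).lt_of_ne' hj)⟩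

theorem pow_smul_le_pow_mulVec [DecidableEq n] [IsOrderedRing R] {A : Matrix n n R}
    (hA : ∀ i j, 0 ≤ A i j) {c : R} (hc : 0 ≤ c) {w : n → R} (h : c • w ≤ A *ᵥ w) (k : ℕ) :
    c ^ k • w ≤ (A ^ k) *ᵥ w := by
  induction k with
  | zero => simp
  | succ k ih =>
    calc c ^ (k + 1) • w = c ^ k • (c • w) := by rw [pow_succ, mul_smul]
      _ ≤ c ^ k • (A *ᵥ w) := smul_le_smul_of_nonneg_left h (pow_nonneg hc k)
      _ = A *ᵥ (c ^ k • w) := (mulVec_smul A _ w).symm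
      _ ≤ A *ᵥ ((A ^ k) *ᵥ w) := mulVec_mono_of_nonneg hA ih
      _ = (A ^ (k + 1)) *ᵥ w := by rw [mulVec_mulVec, pow_succ']

theorem pow_succ_apply_pos [DecidableEq n] [IsStrictOrderedRing R] {A : Matrix n n R}
    (hA : ∀ i j, 0 ≤ A i j) {k : ℕ} (hk : 0 < k) (hAk : ∀ i j, 0 < (A ^ k) i j) (i j : n) :
    0 < (A ^ (k + 1)) i j := by
  obtain ⟨l, hl⟩ : ∃ l, 0 < A i l := by
    by_contra! hrow
    refine (hAk i i).ne' ?_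
    rw [← Nat.succ_pred_eq_of_pos hk, pow_succ', mul_apply]
    exact Finset.sum_eq_zero fun l _ => by
      rw [((hA i l).lt_or_eq.resolve_left (hrow l)).symm, zero_mul]
  rw [pow_succ', mul_apply]
  exact Finset.sum_pos' (fun l _ => mul_nonneg (hA i l) (hAk l j).le)
    ⟨l, Finset.mem_univ l, mul_pos hl (hAk l j)⟩

end OrderedSemiring

theorem norm_mulVec_map_ofReal_le {A : Matrix m n ℝ} (hA : ∀ i j, 0 ≤ A i j) (x : n → ℂ)
    (i : m) : ‖(A.map Complex.ofReal *ᵥ x) i‖ ≤ (A *ᵥ fun j => ‖x j‖) i := by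
  refine (norm_sum_le _ _).trans_eq (Finset.sum_congr rfl fun j _ => ?_)
  change ‖(A i j : ℂ) * x j‖ = A i j * ‖x j‖
  rw [norm_mul, Complex.norm_real, Real.norm_of_nonneg (hA i j)]

theorem eq_norm_of_mulVec_norm_eq {A : Matrix n n ℝ} (hA : ∀ i j, 0 < A i j) {β : ℂ}
    {x : n → ℂ} (hx0 : x ≠ 0) (hx : A.map Complex.ofReal *ᵥ x = β • x)
    (hnorm : (A *ᵥ fun j => ‖x j‖) = ‖β‖ • fun j => ‖x j‖) : β = ‖β‖ := by
  set u : n → ℝ := fun j => ‖x j‖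
  obtain ⟨i, hi⟩ := Function.ne_iff.1 hx0
  have hterm : ∀ j, ‖(A i j : ℂ) * x j‖ = A i j * u j := fun j => by
    rw [norm_mul, Complex.norm_real, Real.norm_of_nonneg (hA i j).le]
  have hrow : ‖∑ j, (A i j : ℂ) * x j‖ = ∑ j, ‖(A i j : ℂ) * x j‖ :=
    calc ‖(A.map Complex.ofReal *ᵥ x) i‖ = ‖β‖ * u i := by
          rw [hx, Pi.smul_apply, smul_eq_mul, norm_mul]
      _ = (A *ᵥ u) i := (congrFun hnorm i).symm
      _ = ∑ j, ‖(A i j : ℂ) * x j‖ := Finset.sum_congr rfl fun j _ => (hterm j).symm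
  obtain ⟨d, -, hd⟩ := Complex.exists_forall_eq_norm_mul_of_norm_sum_eq hrow
  have hxd : x = d • (Complex.ofReal ∘ u) := funext fun j => by
    have hj := hd j (Finset.mem_univ j)
    rw [hterm, Complex.ofReal_mul, mul_assoc] at hj
    rw [mul_left_cancel₀ (Complex.ofReal_ne_zero.2 (hA i j).ne') hj, Pi.smul_apply,
      Function.comp_apply, smul_eq_mul, mul_comm]
  refine smul_left_injective ℂ hx0 ?_
  calc β • x = A.map Complex.ofReal *ᵥ x := hx.symm
    _ = d • (Complex.ofReal ∘ (A *ᵥ u)) := by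
      rw [hxd, mulVec_smul]
      exact congrArg _ (funext (RingHom.map_mulVec Complex.ofRealHom A u)).symm
    _ = (‖β‖ : ℂ) • x := by
      rw [hnorm, hxd]
      ext j
      simp only [Pi.smul_apply, Function.comp_apply, smul_eq_mul, Complex.ofReal_mul]
      ring

variable [DecidableEq n]

theorem exists_mulVec_eq_smul_of_mem_spectrum {K : Type*} [Field K] {M : Matrix n n K} {μ : K}
    (h : μ ∈ spectrum K M) : ∃ v ≠ 0, M *ᵥ v = μ • v := by
  rw [← spectrum_toLin', ← Module.End.hasEigenvalue_iff_mem_spectrum] at h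
  obtain ⟨v, hv⟩ := h.exists_hasEigenvector
  rw [Module.End.hasEigenvector_iff, Module.End.mem_eigenspace_iff, toLin'_apply] at hv
  exact ⟨v, hv.2, hv.1⟩

theorem map_ofReal_pow (A : Matrix n n ℝ) (k : ℕ) :
    (A ^ k).map Complex.ofReal = A.map Complex.ofReal ^ k :=
  Matrix.map_pow A Complex.ofRealHom k

theorem spectrum_map_ofReal_pow (A : Matrix n n ℝ) {k : ℕ} (hk : 0 < k) :
    spectrum ℂ ((A ^ k).map Complex.ofReal) = (· ^ k) '' spectrum ℂ (A.map Complex.ofReal) := by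
  rw [map_ofReal_pow, spectrum.map_pow_of_pos _ hk]

section LinftyOpNorm

attribute [local instance] Matrix.linftyOpNormedRing Matrix.linftyOpNormedAlgebra

theorem pow_mul_le_norm_pow_map_ofReal {A : Matrix n n ℝ} (hA : ∀ i j, 0 ≤ A i j) {c : ℝ}
    (hc : 0 ≤ c) {w : n → ℝ} (h : c • w ≤ A *ᵥ w) (k : ℕ) (i : n) :
    c ^ k * w i ≤ ‖A.map Complex.ofReal ^ k‖ * ‖Complex.ofReal ∘ w‖ :=
  calc c ^ k * w i ≤ ((A ^ k) *ᵥ w) i := pow_smul_le_pow_mulVec hA hc h k i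
    _ ≤ ‖(((A ^ k) *ᵥ w) i : ℂ)‖ := by rw [Complex.norm_real]; exact Real.le_norm_self _
    _ = ‖(A.map Complex.ofReal ^ k *ᵥ (Complex.ofReal ∘ w)) i‖ := by
        rw [← map_ofReal_pow]
        exact congrArg _ (RingHom.map_mulVec Complex.ofRealHom _ _ i)
    _ ≤ ‖A.map Complex.ofReal ^ k *ᵥ (Complex.ofReal ∘ w)‖ := norm_le_pi_norm _ i
    _ ≤ ‖A.map Complex.ofReal ^ k‖ * ‖Complex.ofReal ∘ w‖ := linfty_opNorm_mulVec _ _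

theorem exists_le_norm_mem_spectrum_of_smul_le_mulVec {A : Matrix n n ℝ} (hA : ∀ i j, 0 ≤ A i j)
    {c : ℝ} {w : n → ℝ} {i : n} (hwi : 0 < w i) (h : c • w ≤ A *ᵥ w) :
    ∃ γ ∈ spectrum ℂ (A.map Complex.ofReal), c ≤ ‖γ‖ := by
  have : Nonempty n := ⟨i⟩
  set M := A.map Complex.ofReal
  by_contra! hlt
  obtain ⟨γ₀, hγ₀⟩ := spectrum.nonempty M
  have hc : 0 < c := (norm_nonneg γ₀).trans_lt (hlt γ₀ hγ₀)
  obtain ⟨r, hMr, hrc'⟩ := ENNReal.lt_iff_exists_nnreal_btwn.1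
    (spectrum.spectralRadius_lt_of_forall_lt M (r := ⟨c, hc.le⟩) fun γ hγ => hlt γ hγ)
  have hrc : (r : ℝ) < c := NNReal.coe_lt_coe.2 (ENNReal.coe_lt_coe.1 hrc')
  set C := ‖Complex.ofReal ∘ w‖
  have hsmall : ∀ᶠ k in atTop, (r / c) ^ k * C < w i := by
    refine ((tendsto_pow_atTop_nhds_zero_of_lt_one (by positivity) ?_).mul_const C
      ).eventually_lt_const ?_
    · rwa [div_lt_one hc]
    · rwa [zero_mul]
  obtain ⟨k, hMk, hk⟩ := ((spectrum.eventually_nnnorm_pow_lt M hMr).and hsmall).exists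
  have hMk : ‖M ^ k‖ < r ^ k := by exact_mod_cast hMk
  have : c ^ k * w i < c ^ k * w i :=
    calc c ^ k * w i ≤ ‖M ^ k‖ * C := pow_mul_le_norm_pow_map_ofReal hA hc.le h k i
      _ ≤ r ^ k * C := by gcongr
      _ = c ^ k * ((r / c) ^ k * C) := by rw [← mul_assoc, ← mul_pow, mul_div_cancel₀ _ hc.ne']
      _ < c ^ k * w i := by gcongr
  exact lt_irrefl _ this

end LinftyOpNorm

theorem exists_lt_norm_mem_spectrum_of_lt_mulVec {A : Matrix n n ℝ} (hA : ∀ i j, 0 ≤ A i j)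
    {c : ℝ} {w : n → ℝ} {i : n} (hwi : 0 < w i) (h : ∀ j, c * w j < (A *ᵥ w) j) :
    ∃ γ ∈ spectrum ℂ (A.map Complex.ofReal), c < ‖γ‖ := by
  obtain ⟨c', hcc', hc'⟩ : ∃ c', c < c' ∧ ∀ j, c' * w j < (A *ᵥ w) j :=
    Filter.Eventually.exists_gt <| eventually_all.2 fun j =>
      ((continuous_mul_const (w j)).tendsto c).eventually_lt_const (h j)
  obtain ⟨γ, hγ, hc'γ⟩ := exists_le_norm_mem_spectrum_of_smul_le_mulVec hA hwi fun j => (hc' j).le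
  exact ⟨γ, hγ, hcc'.trans_le hc'γ⟩

theorem eq_norm_of_pos_of_forall_norm_le {A : Matrix n n ℝ} (hA : ∀ i j, 0 < A i j) {β : ℂ}
    (hβ : β ∈ spectrum ℂ (A.map Complex.ofReal))
    (hmax : ∀ γ ∈ spectrum ℂ (A.map Complex.ofReal), ‖γ‖ ≤ ‖β‖) : β = ‖β‖ := by
  obtain ⟨x, hx0, hx⟩ := exists_mulVec_eq_smul_of_mem_spectrum hβ
  set u : n → ℝ := fun j => ‖x j‖
  have hu : 0 ≤ u := fun j => norm_nonneg _
  obtain ⟨i, hi⟩ := Function.ne_iff.1 hx0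
  have hu0 : u ≠ 0 := Function.ne_iff.2 ⟨i, norm_ne_zero_iff.2 hi⟩
  have hle : ‖β‖ • u ≤ A *ᵥ u := fun j => by
    simpa [hx, norm_mul] using norm_mulVec_map_ofReal_le (fun i j => (hA i j).le) x j
  refine eq_norm_of_mulVec_norm_eq hA hx0 hx (by_contra fun hne => ?_)
  have hlt : ∀ j, ‖β‖ * (A *ᵥ u) j < (A *ᵥ (A *ᵥ u)) j := fun j => by
    have := mulVec_pos_of_pos hA (sub_nonneg.2 hle) (sub_ne_zero.2 hne) j
    rwa [mulVec_sub, mulVec_smul, Pi.sub_apply, sub_pos] at this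
  obtain ⟨γ, hγ, hβγ⟩ := exists_lt_norm_mem_spectrum_of_lt_mulVec (fun i j => (hA i j).le)
    (mulVec_pos_of_pos hA hu hu0 i) hlt
  exact (hmax γ hγ).not_gt hβγ

theorem pow_eq_norm_pow_of_pow_pos {A : Matrix n n ℝ} {k : ℕ} (hk : 0 < k)
    (hAk : ∀ i j, 0 < (A ^ k) i j) {β : ℂ} (hβ : β ∈ spectrum ℂ (A.map Complex.ofReal))
    (hmax : ∀ γ ∈ spectrum ℂ (A.map Complex.ofReal), ‖γ‖ ≤ ‖β‖) : β ^ k = (‖β‖ : ℂ) ^ k := by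
  have h := eq_norm_of_pos_of_forall_norm_le hAk (β := β ^ k)
    (by rw [spectrum_map_ofReal_pow A hk]; exact ⟨β, hβ, rfl⟩)
    (by
      rw [spectrum_map_ofReal_pow A hk]
      rintro _ ⟨γ, hγ, rfl⟩
      rw [norm_pow, norm_pow]
      exact pow_le_pow_left₀ (norm_nonneg _) (hmax γ hγ) k)
  rwa [norm_pow, Complex.ofReal_pow] at h

end Matrix

theorem norm_le_specRad {n : ℕ} {A : Matrix (Fin n) (Fin n) ℝ} {β : ℂ}
    (hβ : β ∈ spectrum ℂ (A.map Complex.ofReal)) : ‖β‖ ≤ specRad A :=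
  le_csSup (((finite_spectrum (A.map Complex.ofReal)).image (‖·‖)).bddAbove.mono
    (by rintro _ ⟨γ, hγ, rfl⟩; exact ⟨γ, hγ, rfl⟩)) ⟨β, hβ, rfl⟩

theorem primitive_spectral_radius_strictly_dominant {n : ℕ}
    (T : Matrix (Fin n) (Fin n) ℝ) (hT : T.IsPrimitive') :
    ∀ β : ℂ, β ∈ spectrum ℂ (T.map (Complex.ofReal)) → β ≠ (specRad T : ℂ) →
      ‖β‖ < specRad T := by
  intro β hβ hne
  refine (norm_le_specRad hβ).lt_of_ne fun hβρ => hne ?_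
  obtain ⟨hT0, k, hk, hTk⟩ := hT
  have hmax : ∀ γ ∈ spectrum ℂ (T.map Complex.ofReal), ‖γ‖ ≤ ‖β‖ :=
    fun γ hγ => hβρ ▸ norm_le_specRad hγ
  rw [← hβρ]
  exact eq_of_pow_eq_of_pow_succ_eq (pow_eq_norm_pow_of_pow_pos hk hTk hβ hmax)
    (pow_eq_norm_pow_of_pow_pos k.succ_pos (Matrix.pow_succ_apply_pos hT0 hk hTk) hβ hmax)
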